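/- The degree vector of the multiset {2^8, 3^2, 4^8, 5^2, 6^7, 7, 8^7, 9, 10^5, 11, 12^5, 13, 14^5, 16^3, 18^2, 20^2, 22, 24^2, 26, 28, 30} is not a nonnegative rational linear combination of the degree vectors of the 61 simple Q-reflection groups whose degrees are all at most 30, namely the Weyl groups of types A_n (1 ≤ n ≤ 29), B_n (2 ≤ n ≤ 15), D_n (4 ≤ n ≤ 16), G_2, F_4, E_6, E_7, and E_8. -/

import Mathlib

/-- Degrees of the Weyl group of type `Aₙ`: `{2, 3, ..., n+1}`. -/
def degA (n : ℕ) : Multiset ℕ := (Finset.Icc 2 (n+1)).val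
/-- Degrees of the Weyl group of type `Bₙ`: `{2, 4, ..., 2n}`. -/
def degB (n : ℕ) : Multiset ℕ := (Finset.Icc 1 n).val.map (fun k => 2*k)
/-- Degrees of the Weyl group of type `Dₙ`: `{2, 4, ..., 2n-2} ∪ {n}`. -/
def degD (n : ℕ) : Multiset ℕ := (Finset.Icc 1 (n-1)).val.map (fun k => 2*k) + {n}
def degG2 : Multiset ℕ := {2, 6}
def degF4 : Multiset ℕ := {2, 6, 8, 12}
def degE6 : Multiset ℕ := {2, 5, 6, 8, 9, 12}
def degE7 : Multiset ℕ := {2, 6, 8, 10, 12, 14, 18}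
def degE8 : Multiset ℕ := {2, 8, 12, 14, 18, 20, 24, 30}
/-- The degree multiset `{2⁸,3²,4⁸,5²,6⁷,7,8⁷,9,10⁵,11,12⁵,13,14⁵,16³,18²,20²,22,24²,26,28,30}`
of the rank 66 finite loop space. -/
def D66 : Multiset ℕ :=
  Multiset.replicate 8 2 + Multiset.replicate 2 3 + Multiset.replicate 8 4 +
  Multiset.replicate 2 5 + Multiset.replicate 7 6 + {7} + Multiset.replicate 7 8 +
  {9} + Multiset.replicate 5 10 + {11} + Multiset.replicate 5 12 + {13} +
  Multiset.replicate 5 14 + Multiset.replicate 3 16 + Multiset.replicate 2 18 +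
  Multiset.replicate 2 20 + {22} + Multiset.replicate 2 24 + {26} + {28} + {30}
/-- The degree vector of a multiset of degrees. -/
def degVec (M : Multiset ℕ) : Fin 30 → ℚ := fun i => (M.count ((i : ℕ) + 1) : ℚ)
/-- The list of degree multisets of the 61 simple `ℚ`-reflection groups all of whose
degrees are at most 30. -/
def LieList : List (Multiset ℕ) :=
  (List.range' 1 29).map degA ++ (List.range' 2 14).map degB ++
  (List.range' 4 13).map degD ++ [degG2, degF4, degE6, degE7, degE8]

/-!
A separating hyperplane, found by linear programming: an integer weighting of the degrees under
which the degrees of each of the 61 groups have nonnegative total weight, while those of `D66`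
have total weight `-1`. A nonnegative combination of vectors of nonnegative weight cannot have
negative weight.
-/

theorem not_exists_nonneg_combination_eq_of_separating {𝕜 V ι : Type*} [Semiring 𝕜]
    [PartialOrder 𝕜] [IsOrderedRing 𝕜] [AddCommMonoid V] [Module 𝕜 V] [Fintype ι]
    (f : V →ₗ[𝕜] 𝕜) (v : ι → V) (x : V) (hv : ∀ j, 0 ≤ f (v j)) (hx : f x < 0) :
    ¬ ∃ c : ι → 𝕜, (∀ j, 0 ≤ c j) ∧ x = ∑ j, c j • v j := by
  rintro ⟨c, hc, rfl⟩
  simp only [map_sum, map_smul, smul_eq_mul] at hx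
  exact (Finset.sum_nonneg fun j _ => mul_nonneg (hc j) (hv j)).not_gt hx

def separatingWeight : ℕ → ℤ
  | 2 => 2 | 7 => 1 | 12 => 1 | 15 => 1 | 22 => 4 | 30 => 1
  | 3 => -1 | 4 => -1 | 8 => -1 | 13 => -1 | 16 => -1 | 24 => -3 | 26 => -1
  | _ => 0

def totalWeight (M : Multiset ℕ) : ℤ :=
  ∑ i : Fin 30, separatingWeight (i + 1) * M.count ((i : ℕ) + 1)

def separatingFunctional : Module.Dual ℚ (Fin 30 → ℚ) :=
  dotProductEquiv ℚ (Fin 30) fun i => (separatingWeight (i + 1) : ℚ)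

theorem separatingFunctional_degVec (M : Multiset ℕ) :
    separatingFunctional (degVec M) = totalWeight M := by
  simp [separatingFunctional, dotProduct, totalWeight, degVec]

theorem totalWeight_nonneg_of_mem_LieList : ∀ M ∈ LieList, 0 ≤ totalWeight M := by
  decide

theorem totalWeight_D66 : totalWeight D66 = -1 := by
  decide

/-- The degree vector of `D66` is not a nonnegative rational linear combination of the
degree vectors of the 61 simple `ℚ`-reflection groups with all degrees at most 30. -/
theorem D66_not_in_Lie_cone :
    ¬ ∃ c : Fin LieList.length → ℚ, (∀ j, 0 ≤ c j) ∧
      degVec D66 = ∑ j, c j • degVec (LieList.get j) := by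
  refine not_exists_nonneg_combination_eq_of_separating separatingFunctional _ _
    (fun j => ?_) ?_
  · rw [separatingFunctional_degVec]
    exact_mod_cast totalWeight_nonneg_of_mem_LieList _ (List.get_mem _ _)
  · rw [separatingFunctional_degVec, totalWeight_D66]
    norm_num
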